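/- Let F ⊆ 2^[n] be a partition-free family and let s₁, s₂, s₃ be nonnegative integers with s₁ + s₂ + s₃ ≤ n. Let y^t = C(n,t) − |{F ∈ F : |F| = t}|. Then ∑_{i=1}^{3} [ y^{s_i}/C(n,s_i) + y^{s_{i+1}+s_{i-1}}/C(n, s_{i+1}+s_{i-1}) ] ≥ 2, with cyclic index conventions on {1,2,3}. -/

import Mathlib

def PartitionFree (F : Finset (Finset ℕ)) : Prop :=
  ¬ ∃ F₀ ∈ F, ∃ F₁ ∈ F, ∃ F₂ ∈ F, F₁ ∩ F₂ = ∅ ∧ F₀ = F₁ ∪ F₂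

/-- `missing n F t` is the number of `t`-element subsets of `[n]` missing from `F`. -/
noncomputable def missing (n : ℕ) (F : Finset (Finset ℕ)) (t : ℕ) : ℝ :=
  (n.choose t : ℝ) - (F.filter (fun S => S.card = t)).card

/-!
Push three fixed pairwise disjoint sets `A, B, C` of sizes `s₁, s₂, s₃` forward by a uniformly
random permutation of `[n]`. The image of a fixed `t`-set is a uniformly random `t`-set, so it
lies in `F` with probability `1 - y^t / C(n,t)`. A partition-free family contains at most four
of `A, B, C, B ∪ C, C ∪ A, A ∪ B`: if two of `A, B, C` lie in it, their union does not. Taking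
expectations, the six probabilities sum to at most `4`.
-/

open Finset Equiv
open scoped Pointwise Nat

section UnionFree

variable {α : Type*} [DecidableEq α]

def UnionFree (G : Finset (Finset α)) : Prop :=
  ∀ P ∈ G, ∀ Q ∈ G, Disjoint P Q → P ∪ Q ∉ G

lemma UnionFree.indicator_sum_le_four {G : Finset (Finset α)} (hG : UnionFree G)
    {A B C : Finset α} (hAB : Disjoint A B) (hBC : Disjoint B C) (hCA : Disjoint C A) :
    ((if A ∈ G then 1 else 0) + (if B ∪ C ∈ G then 1 else 0)) +
      ((if B ∈ G then 1 else 0) + (if C ∪ A ∈ G then 1 else 0)) +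
      ((if C ∈ G then 1 else 0) + (if A ∪ B ∈ G then 1 else 0)) ≤ 4 := by
  have hAB' : A ∈ G → B ∈ G → A ∪ B ∉ G := fun hA hB => hG A hA B hB hAB
  have hBC' : B ∈ G → C ∈ G → B ∪ C ∉ G := fun hB hC => hG B hB C hC hBC
  have hCA' : C ∈ G → A ∈ G → C ∪ A ∉ G := fun hC hA => hG C hC A hA hCA
  split_ifs <;> simp_all

variable [Fintype α]

noncomputable def levelDensity (G : Finset (Finset α)) (t : ℕ) : ℝ :=
  #{S ∈ G | #S = t} / (Fintype.card α).choose t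

lemma card_perm_smul_eq_eq {I S : Finset α} (h : #S = #I) :
    #{σ : Perm α | σ • I = S} = #{σ : Perm α | σ • I = I} := by
  have := Set.powersetCard.isPretransitive (α := α) (n := #I)
  obtain ⟨τ, hτ⟩ := MulAction.exists_smul_eq (Perm α)
    (⟨I, rfl⟩ : Set.powersetCard α #I) ⟨S, h⟩
  replace hτ : τ • I = S := congrArg Subtype.val hτ
  symm
  refine card_nbij' (τ * ·) (τ⁻¹ * ·) ?_ ?_ (fun σ _ => by simp) (fun σ _ => by simp)
  · intro σ hσ
    simp_all [mul_smul]
  · intro σ hσ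
    simp_all [mul_smul, inv_smul_eq_iff]

lemma card_perm_smul_mem (I : Finset α) (G : Finset (Finset α)) :
    (#{σ : Perm α | σ • I ∈ G} : ℝ) = (Fintype.card α)! * levelDensity G #I := by
  have hG : #{σ : Perm α | σ • I ∈ G} =
      #{S ∈ G | #S = #I} * #{σ : Perm α | σ • I = I} := by
    rw [card_eq_sum_card_fiberwise (f := (· • I)) (t := {S ∈ G | #S = #I})]
    · rw [← smul_eq_mul, ← sum_const]
      refine sum_congr rfl fun S hS => ?_
      rw [filter_filter, ← card_perm_smul_eq_eq (mem_filter.mp hS).2]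
      congr 1; ext σ
      simp only [mem_filter, mem_univ, true_and, and_iff_right_iff_imp]
      rintro rfl; exact (mem_filter.mp hS).1
    · intro σ hσ
      simp_all [card_smul_finset]
  have hU : (Fintype.card α)! = (Fintype.card α).choose #I * #{σ : Perm α | σ • I = I} := by
    rw [← Fintype.card_perm, ← card_univ,
      card_eq_sum_card_fiberwise (f := (· • I)) (t := powersetCard #I univ)]
    · rw [sum_congr rfl fun S hS => card_perm_smul_eq_eq (mem_powersetCard.mp hS).2,
        sum_const, card_powersetCard, card_univ, smul_eq_mul]
    · intro σ _
      simp [card_smul_finset]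
  have hC : ((Fintype.card α).choose #I : ℝ) ≠ 0 := by
    exact_mod_cast (Nat.choose_pos (card_le_univ I)).ne'
  rw [levelDensity, hG, hU]
  push_cast
  field_simp

lemma UnionFree.card_perm_smul_mem_le {G : Finset (Finset α)} (hG : UnionFree G)
    {A B C : Finset α} (hAB : Disjoint A B) (hBC : Disjoint B C) (hCA : Disjoint C A) :
    (#{σ : Perm α | σ • A ∈ G} + #{σ : Perm α | σ • (B ∪ C) ∈ G}) +
      (#{σ : Perm α | σ • B ∈ G} + #{σ : Perm α | σ • (C ∪ A) ∈ G}) +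
      (#{σ : Perm α | σ • C ∈ G} + #{σ : Perm α | σ • (A ∪ B) ∈ G}) ≤
      4 * (Fintype.card α)! := by
  have hdisj {X Y : Finset α} (σ : Perm α) (h : Disjoint X Y) : Disjoint (σ • X) (σ • Y) := by
    rw [← disjoint_coe, coe_smul_finset, coe_smul_finset, Set.disjoint_smul_set]
    exact disjoint_coe.mpr h
  simp only [card_filter, ← sum_add_distrib, smul_finset_union]
  rw [← Fintype.card_perm, ← card_univ, mul_comm, ← smul_eq_mul, ← sum_const]
  exact sum_le_sum fun σ _ =>
    hG.indicator_sum_le_four (hdisj σ hAB) (hdisj σ hBC) (hdisj σ hCA)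

theorem UnionFree.levelDensity_le_four {G : Finset (Finset α)} (hG : UnionFree G)
    {s₁ s₂ s₃ : ℕ} (hs : s₁ + s₂ + s₃ ≤ Fintype.card α) :
    (levelDensity G s₁ + levelDensity G (s₂ + s₃)) +
      (levelDensity G s₂ + levelDensity G (s₃ + s₁)) +
      (levelDensity G s₃ + levelDensity G (s₁ + s₂)) ≤ 4 := by
  obtain ⟨A, -, hA⟩ := exists_subset_card_eq (s := (univ : Finset α)) (n := s₁)
    (by rw [card_univ]; omega)
  obtain ⟨B, hBA, hB⟩ := exists_subset_card_eq (s := Aᶜ) (n := s₂)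
    (by rw [card_compl]; omega)
  have hAB : Disjoint A B := subset_compl_iff_disjoint_left.mp hBA
  obtain ⟨C, hCAB, hC⟩ := exists_subset_card_eq (s := (A ∪ B)ᶜ) (n := s₃)
    (by rw [card_compl, card_union_of_disjoint hAB]; omega)
  obtain ⟨hAC, hBC⟩ := disjoint_union_left.mp (subset_compl_iff_disjoint_left.mp hCAB)
  rw [← hA, ← hB, ← hC, ← card_union_of_disjoint hBC, ← card_union_of_disjoint hAC.symm,
    ← card_union_of_disjoint hAB,
    ← mul_le_mul_iff_of_pos_left (by positivity : (0 : ℝ) < (Fintype.card α)!)]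
  simp only [mul_add, ← card_perm_smul_mem]
  exact_mod_cast (hG.card_perm_smul_mem_le hAB hBC hAC.symm).trans_eq (mul_comm _ _)

end UnionFree

section SubtypeFamily

variable {β : Type*} [DecidableEq β] {X : Finset β} {F : Finset (Finset β)}

/-- `F` seen as a family of subsets of the type `↥X`, on which `Perm X` acts. -/
def subtypeFamily (X : Finset β) (F : Finset (Finset β)) : Finset (Finset X) :=
  {S | S.map (.subtype (· ∈ X)) ∈ F}

@[simp]
lemma mem_subtypeFamily {S : Finset X} :
    S ∈ subtypeFamily X F ↔ S.map (.subtype (· ∈ X)) ∈ F := by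
  simp [subtypeFamily]

lemma UnionFree.subtypeFamily (hF : UnionFree F) (X : Finset β) :
    UnionFree (subtypeFamily X F) := by
  intro P hP Q hQ hPQ hPQF
  rw [mem_subtypeFamily, map_union] at hPQF
  exact hF _ (mem_subtypeFamily.mp hP) _ (mem_subtypeFamily.mp hQ) ((disjoint_map _).mpr hPQ) hPQF

lemma card_filter_card_subtypeFamily (hF : F ⊆ X.powerset) (t : ℕ) :
    #{S ∈ subtypeFamily X F | #S = t} = #{T ∈ F | #T = t} := by
  have hmap : ∀ T ∈ F, (T.subtype (· ∈ X)).map (.subtype _) = T :=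
    fun T hT => subtype_map_of_mem fun x hx => mem_powerset.mp (hF hT) hx
  refine card_nbij' (·.map (.subtype (· ∈ X))) (·.subtype (· ∈ X)) ?_ ?_ ?_ ?_
  · intro S hS
    simp_all
  · intro T hT
    obtain ⟨hTF, hTt⟩ := mem_filter.mp hT
    refine mem_filter.mpr ⟨mem_subtypeFamily.mpr (by rwa [hmap T hTF]), ?_⟩
    rw [← card_map (.subtype (· ∈ X)), hmap T hTF, hTt]
  · intro S _
    ext x
    simp
  · intro T hT
    exact hmap T (mem_filter.mp hT).1

lemma levelDensity_subtypeFamily (hF : F ⊆ X.powerset) (t : ℕ) :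
    levelDensity (subtypeFamily X F) t = #{T ∈ F | #T = t} / (#X).choose t := by
  rw [levelDensity, card_filter_card_subtypeFamily hF, Fintype.card_coe]

end SubtypeFamily

lemma PartitionFree.unionFree {F : Finset (Finset ℕ)} (hF : PartitionFree F) : UnionFree F :=
  fun P hP Q hQ hPQ hPQF =>
    hF ⟨P ∪ Q, hPQF, P, hP, Q, hQ, disjoint_iff_inter_eq_empty.mp hPQ, rfl⟩

lemma missing_div_choose {n t : ℕ} (F : Finset (Finset ℕ)) (ht : t ≤ n) :
    missing n F t / n.choose t = 1 - #{T ∈ F | #T = t} / n.choose t := by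
  have : (n.choose t : ℝ) ≠ 0 := by exact_mod_cast (Nat.choose_pos ht).ne'
  rw [missing, sub_div, div_self this]

theorem stmt_10 (n : ℕ) (F : Finset (Finset ℕ))
    (hF : F ⊆ (Finset.range n).powerset)
    (hpf : PartitionFree F)
    (s₁ s₂ s₃ : ℕ) (hs : s₁ + s₂ + s₃ ≤ n) :
    (missing n F s₁ / (n.choose s₁ : ℝ) +
        missing n F (s₂ + s₃) / (n.choose (s₂ + s₃) : ℝ)) +
      (missing n F s₂ / (n.choose s₂ : ℝ) +
        missing n F (s₃ + s₁) / (n.choose (s₃ + s₁) : ℝ)) +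
      (missing n F s₃ / (n.choose s₃ : ℝ) +
        missing n F (s₁ + s₂) / (n.choose (s₁ + s₂) : ℝ)) ≥ 2 := by
  have hdensity := (hpf.unionFree.subtypeFamily (range n)).levelDensity_le_four
    (by rwa [Fintype.card_coe, card_range])
  simp only [levelDensity_subtypeFamily hF, card_range] at hdensity
  rw [missing_div_choose F (by omega : s₁ ≤ n), missing_div_choose F (by omega : s₂ + s₃ ≤ n),
    missing_div_choose F (by omega : s₂ ≤ n), missing_div_choose F (by omega : s₃ + s₁ ≤ n),
    missing_div_choose F (by omega : s₃ ≤ n), missing_div_choose F (by omega : s₁ + s₂ ≤ n)]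
  linarith
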